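/- The Jacobian of the one-parameter D2Q9 equilibrium map is a projection matrix for every value of the parameter: for all real g, λ, all e > 0, all h ∈ ℝ and u = (u₁,u₂) ∈ ℝ², the 9×9 real matrix D with entries D_{0j} = (8+λ)/9 − (4+λ)gh/(3e²) − 4(ξ_j·u)/(3e²) + 2|u|²/(3e²); D_{ij} = (1−λ)/18 + (1+λ)gh/(6e²) + (ξ_i·ξ_j)/(3e²) + (ξ_i·ξ_j)(ξ_i·u)/e⁴ − (ξ_i·u)²/(2e⁴) − (ξ_j·u)/(3e²) + |u|²/(6e²) for 1 ≤ i ≤ 4; D_{ij} = (λ−1)/36 + (2−λ)gh/(12e²) + (ξ_i·ξ_j)/(12e²) + (ξ_i·ξ_j)(ξ_i·u)/(4e⁴) − (ξ_i·u)²/(8e⁴) − (ξ_j·u)/(12e²) + |u|²/(24e²) for 5 ≤ i ≤ 8 (j = 0,…,8 throughout), satisfies D² = D. -/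

import Mathlib

/-- Dot product on `ℝ × ℝ`. -/
def pdot (a b : ℝ × ℝ) : ℝ := a.1 * b.1 + a.2 * b.2

/-- The D2Q9 lattice velocities with lattice speed `e`. -/
def xi9 (e : ℝ) : Fin 9 → ℝ × ℝ :=
  ![(0, 0), (e, 0), (0, e), (-e, 0), (0, -e), (e, e), (-e, e), (-e, -e), (e, -e)]

/-- The Jacobian `∂f_i^eq/∂f_j` of the one-parameter D2Q9 equilibrium map. -/
noncomputable def DL (g l e h : ℝ) (u : ℝ × ℝ) : Matrix (Fin 9) (Fin 9) ℝ :=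
  Matrix.of fun i j =>
    if i = 0 then
      (8 + l) / 9 - (4 + l) * g * h / (3 * e ^ 2) - 4 * pdot (xi9 e j) u / (3 * e ^ 2)
        + 2 * pdot u u / (3 * e ^ 2)
    else if (i : ℕ) ≤ 4 then
      (1 - l) / 18 + (1 + l) * g * h / (6 * e ^ 2) + pdot (xi9 e i) (xi9 e j) / (3 * e ^ 2)
        + pdot (xi9 e i) (xi9 e j) * pdot (xi9 e i) u / e ^ 4
        - pdot (xi9 e i) u ^ 2 / (2 * e ^ 4)
        - pdot (xi9 e j) u / (3 * e ^ 2) + pdot u u / (6 * e ^ 2)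
    else
      (l - 1) / 36 + (2 - l) * g * h / (12 * e ^ 2) + pdot (xi9 e i) (xi9 e j) / (12 * e ^ 2)
        + pdot (xi9 e i) (xi9 e j) * pdot (xi9 e i) u / (4 * e ^ 4)
        - pdot (xi9 e i) u ^ 2 / (8 * e ^ 4)
        - pdot (xi9 e j) u / (12 * e ^ 2) + pdot u u / (24 * e ^ 2)


lemma xi9_smul (e : ℝ) (i : Fin 9) : xi9 e i = (e * (xi9 1 i).1, e * (xi9 1 i).2) := by
  fin_cases i <;> norm_num [xi9]

lemma pdot_smul_left (e : ℝ) (a b : ℝ × ℝ) :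
    pdot (e * a.1, e * a.2) b = e * pdot a b := by simp [pdot]; ring

lemma DL_scale (g l e h : ℝ) (he : e ≠ 0) (u : ℝ × ℝ) :
    DL g l e h u = DL (g * h / e ^ 2) l 1 1 (u.1 / e, u.2 / e) := by
  ext i j
  have hx : ∀ v : ℝ × ℝ, pdot (xi9 e i) v = e * pdot (xi9 1 i) v := fun v => by
    rw [xi9_smul e i]; exact pdot_smul_left e _ v
  have hxj : ∀ v : ℝ × ℝ, pdot (xi9 e j) v = e * pdot (xi9 1 j) v := fun v => by
    rw [xi9_smul e j]; exact pdot_smul_left e _ v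
  have hxi1 : pdot (xi9 e i) (xi9 e j)
      = e * (e * pdot (xi9 1 i) (xi9 1 j)) := by
    rw [xi9_smul e i, xi9_smul e j]; unfold pdot; ring
  have hu : pdot (xi9 1 i) u = e * pdot (xi9 1 i) (u.1 / e, u.2 / e) := by
    unfold pdot; field_simp
    try ring
  have huj : pdot (xi9 1 j) u = e * pdot (xi9 1 j) (u.1 / e, u.2 / e) := by
    unfold pdot; field_simp
    try ring
  have huu : pdot u u = e ^ 2 * pdot (u.1 / e, u.2 / e) (u.1 / e, u.2 / e) := by
    unfold pdot; field_simp
    try ring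
  simp only [DL, Matrix.of_apply, hxi1, hx, hxj, hu, huj, huu]
  split_ifs <;> · field_simp


lemma sum9 (f : Fin 9 → ℝ) : ∑ k, f k = f 0 + f 1 + f 2 + f 3 + f 4 + f 5 + f 6 + f 7 + f 8 := by
  rw [Fin.sum_univ_castSucc, Fin.sum_univ_eight]; rfl

lemma dl0 (g l : ℝ) (u : ℝ × ℝ) (j : Fin 9) : DL g l 1 1 u 0 j =
      (8 + l) / 9 - (4 + l) * g / 3 - 4 * pdot (xi9 1 j) u / 3
        + 2 * pdot u u / 3 := by
  simp [DL]

lemma dl1 (g l : ℝ) (u : ℝ × ℝ) (j : Fin 9) : DL g l 1 1 u 1 j =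
      (1 - l) / 18 + (1 + l) * g / 6 + ((xi9 1 j).1) / 3
        + ((xi9 1 j).1) * (u.1)
        - (u.1) ^ 2 / 2
        - pdot (xi9 1 j) u / 3 + pdot u u / 6 := by
  simp [DL, pdot, show (((1:Fin 9)):ℕ) ≤ 4 from by decide, show ((1:Fin 9) = 0) = False from by decide,
    show xi9 (1:ℝ) 1 = (1, 0) from rfl]
  try ring

lemma dl2 (g l : ℝ) (u : ℝ × ℝ) (j : Fin 9) : DL g l 1 1 u 2 j =
      (1 - l) / 18 + (1 + l) * g / 6 + ((xi9 1 j).2) / 3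
        + ((xi9 1 j).2) * (u.2)
        - (u.2) ^ 2 / 2
        - pdot (xi9 1 j) u / 3 + pdot u u / 6 := by
  simp [DL, pdot, show (((2:Fin 9)):ℕ) ≤ 4 from by decide, show ((2:Fin 9) = 0) = False from by decide,
    show xi9 (1:ℝ) 2 = (0, 1) from rfl]
  try ring

lemma dl3 (g l : ℝ) (u : ℝ × ℝ) (j : Fin 9) : DL g l 1 1 u 3 j =
      (1 - l) / 18 + (1 + l) * g / 6 + (-(xi9 1 j).1) / 3
        + (-(xi9 1 j).1) * (-u.1)
        - (-u.1) ^ 2 / 2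
        - pdot (xi9 1 j) u / 3 + pdot u u / 6 := by
  simp [DL, pdot, show (((3:Fin 9)):ℕ) ≤ 4 from by decide, show ((3:Fin 9) = 0) = False from by decide,
    show xi9 (1:ℝ) 3 = (-1, 0) from rfl]
  try ring

lemma dl4 (g l : ℝ) (u : ℝ × ℝ) (j : Fin 9) : DL g l 1 1 u 4 j =
      (1 - l) / 18 + (1 + l) * g / 6 + (-(xi9 1 j).2) / 3
        + (-(xi9 1 j).2) * (-u.2)
        - (-u.2) ^ 2 / 2
        - pdot (xi9 1 j) u / 3 + pdot u u / 6 := by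
  simp [DL, pdot, show (((4:Fin 9)):ℕ) ≤ 4 from by decide, show ((4:Fin 9) = 0) = False from by decide,
    show xi9 (1:ℝ) 4 = (0, -1) from rfl]
  try ring

lemma dl5 (g l : ℝ) (u : ℝ × ℝ) (j : Fin 9) : DL g l 1 1 u 5 j =
      (l - 1) / 36 + (2 - l) * g / 12 + ((xi9 1 j).1 + (xi9 1 j).2) / 12
        + ((xi9 1 j).1 + (xi9 1 j).2) * (u.1 + u.2) / 4
        - (u.1 + u.2) ^ 2 / 8
        - pdot (xi9 1 j) u / 12 + pdot u u / 24 := by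
  simp [DL, pdot, show ((((5:Fin 9)):ℕ) ≤ 4) = False from by decide, show ((5:Fin 9) = 0) = False from by decide,
    show xi9 (1:ℝ) 5 = (1, 1) from rfl]
  try ring

lemma dl6 (g l : ℝ) (u : ℝ × ℝ) (j : Fin 9) : DL g l 1 1 u 6 j =
      (l - 1) / 36 + (2 - l) * g / 12 + (-(xi9 1 j).1 + (xi9 1 j).2) / 12
        + (-(xi9 1 j).1 + (xi9 1 j).2) * (-u.1 + u.2) / 4
        - (-u.1 + u.2) ^ 2 / 8
        - pdot (xi9 1 j) u / 12 + pdot u u / 24 := by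
  simp [DL, pdot, show ((((6:Fin 9)):ℕ) ≤ 4) = False from by decide, show ((6:Fin 9) = 0) = False from by decide,
    show xi9 (1:ℝ) 6 = (-1, 1) from rfl]
  try ring

lemma dl7 (g l : ℝ) (u : ℝ × ℝ) (j : Fin 9) : DL g l 1 1 u 7 j =
      (l - 1) / 36 + (2 - l) * g / 12 + (-(xi9 1 j).1 + -(xi9 1 j).2) / 12
        + (-(xi9 1 j).1 + -(xi9 1 j).2) * (-u.1 + -u.2) / 4
        - (-u.1 + -u.2) ^ 2 / 8
        - pdot (xi9 1 j) u / 12 + pdot u u / 24 := by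
  simp [DL, pdot, show ((((7:Fin 9)):ℕ) ≤ 4) = False from by decide, show ((7:Fin 9) = 0) = False from by decide,
    show xi9 (1:ℝ) 7 = (-1, -1) from rfl]
  try ring

lemma dl8 (g l : ℝ) (u : ℝ × ℝ) (j : Fin 9) : DL g l 1 1 u 8 j =
      (l - 1) / 36 + (2 - l) * g / 12 + ((xi9 1 j).1 + -(xi9 1 j).2) / 12
        + ((xi9 1 j).1 + -(xi9 1 j).2) * (u.1 + -u.2) / 4
        - (u.1 + -u.2) ^ 2 / 8
        - pdot (xi9 1 j) u / 12 + pdot u u / 24 := by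
  simp [DL, pdot, show ((((8:Fin 9)):ℕ) ≤ 4) = False from by decide, show ((8:Fin 9) = 0) = False from by decide,
    show xi9 (1:ℝ) 8 = (1, -1) from rfl]
  try ring


lemma row0 (g l : ℝ) (u : ℝ × ℝ) (j : Fin 9) :
    (DL g l 1 1 u * DL g l 1 1 u) 0 j = DL g l 1 1 u 0 j := by
  rw [Matrix.mul_apply, sum9]
  simp only [dl0, dl1, dl2, dl3, dl4, dl5, dl6, dl7, dl8, pdot,
      show xi9 (1:ℝ) 0 = (0,0) from rfl, show xi9 (1:ℝ) 1 = (1,0) from rfl,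
      show xi9 (1:ℝ) 2 = (0,1) from rfl, show xi9 (1:ℝ) 3 = (-1,0) from rfl,
      show xi9 (1:ℝ) 4 = (0,-1) from rfl, show xi9 (1:ℝ) 5 = (1,1) from rfl,
      show xi9 (1:ℝ) 6 = (-1,1) from rfl, show xi9 (1:ℝ) 7 = (-1,-1) from rfl,
      show xi9 (1:ℝ) 8 = (1,-1) from rfl]
  ring

lemma row1 (g l : ℝ) (u : ℝ × ℝ) (j : Fin 9) :
    (DL g l 1 1 u * DL g l 1 1 u) 1 j = DL g l 1 1 u 1 j := by
  rw [Matrix.mul_apply, sum9]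
  simp only [dl0, dl1, dl2, dl3, dl4, dl5, dl6, dl7, dl8, pdot,
      show xi9 (1:ℝ) 0 = (0,0) from rfl, show xi9 (1:ℝ) 1 = (1,0) from rfl,
      show xi9 (1:ℝ) 2 = (0,1) from rfl, show xi9 (1:ℝ) 3 = (-1,0) from rfl,
      show xi9 (1:ℝ) 4 = (0,-1) from rfl, show xi9 (1:ℝ) 5 = (1,1) from rfl,
      show xi9 (1:ℝ) 6 = (-1,1) from rfl, show xi9 (1:ℝ) 7 = (-1,-1) from rfl,
      show xi9 (1:ℝ) 8 = (1,-1) from rfl]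
  ring

lemma row2 (g l : ℝ) (u : ℝ × ℝ) (j : Fin 9) :
    (DL g l 1 1 u * DL g l 1 1 u) 2 j = DL g l 1 1 u 2 j := by
  rw [Matrix.mul_apply, sum9]
  simp only [dl0, dl1, dl2, dl3, dl4, dl5, dl6, dl7, dl8, pdot,
      show xi9 (1:ℝ) 0 = (0,0) from rfl, show xi9 (1:ℝ) 1 = (1,0) from rfl,
      show xi9 (1:ℝ) 2 = (0,1) from rfl, show xi9 (1:ℝ) 3 = (-1,0) from rfl,
      show xi9 (1:ℝ) 4 = (0,-1) from rfl, show xi9 (1:ℝ) 5 = (1,1) from rfl,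
      show xi9 (1:ℝ) 6 = (-1,1) from rfl, show xi9 (1:ℝ) 7 = (-1,-1) from rfl,
      show xi9 (1:ℝ) 8 = (1,-1) from rfl]
  ring

lemma row3 (g l : ℝ) (u : ℝ × ℝ) (j : Fin 9) :
    (DL g l 1 1 u * DL g l 1 1 u) 3 j = DL g l 1 1 u 3 j := by
  rw [Matrix.mul_apply, sum9]
  simp only [dl0, dl1, dl2, dl3, dl4, dl5, dl6, dl7, dl8, pdot,
      show xi9 (1:ℝ) 0 = (0,0) from rfl, show xi9 (1:ℝ) 1 = (1,0) from rfl,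
      show xi9 (1:ℝ) 2 = (0,1) from rfl, show xi9 (1:ℝ) 3 = (-1,0) from rfl,
      show xi9 (1:ℝ) 4 = (0,-1) from rfl, show xi9 (1:ℝ) 5 = (1,1) from rfl,
      show xi9 (1:ℝ) 6 = (-1,1) from rfl, show xi9 (1:ℝ) 7 = (-1,-1) from rfl,
      show xi9 (1:ℝ) 8 = (1,-1) from rfl]
  ring

lemma row4 (g l : ℝ) (u : ℝ × ℝ) (j : Fin 9) :
    (DL g l 1 1 u * DL g l 1 1 u) 4 j = DL g l 1 1 u 4 j := by
  rw [Matrix.mul_apply, sum9]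
  simp only [dl0, dl1, dl2, dl3, dl4, dl5, dl6, dl7, dl8, pdot,
      show xi9 (1:ℝ) 0 = (0,0) from rfl, show xi9 (1:ℝ) 1 = (1,0) from rfl,
      show xi9 (1:ℝ) 2 = (0,1) from rfl, show xi9 (1:ℝ) 3 = (-1,0) from rfl,
      show xi9 (1:ℝ) 4 = (0,-1) from rfl, show xi9 (1:ℝ) 5 = (1,1) from rfl,
      show xi9 (1:ℝ) 6 = (-1,1) from rfl, show xi9 (1:ℝ) 7 = (-1,-1) from rfl,
      show xi9 (1:ℝ) 8 = (1,-1) from rfl]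
  ring

lemma row5 (g l : ℝ) (u : ℝ × ℝ) (j : Fin 9) :
    (DL g l 1 1 u * DL g l 1 1 u) 5 j = DL g l 1 1 u 5 j := by
  rw [Matrix.mul_apply, sum9]
  simp only [dl0, dl1, dl2, dl3, dl4, dl5, dl6, dl7, dl8, pdot,
      show xi9 (1:ℝ) 0 = (0,0) from rfl, show xi9 (1:ℝ) 1 = (1,0) from rfl,
      show xi9 (1:ℝ) 2 = (0,1) from rfl, show xi9 (1:ℝ) 3 = (-1,0) from rfl,
      show xi9 (1:ℝ) 4 = (0,-1) from rfl, show xi9 (1:ℝ) 5 = (1,1) from rfl,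
      show xi9 (1:ℝ) 6 = (-1,1) from rfl, show xi9 (1:ℝ) 7 = (-1,-1) from rfl,
      show xi9 (1:ℝ) 8 = (1,-1) from rfl]
  ring

lemma row6 (g l : ℝ) (u : ℝ × ℝ) (j : Fin 9) :
    (DL g l 1 1 u * DL g l 1 1 u) 6 j = DL g l 1 1 u 6 j := by
  rw [Matrix.mul_apply, sum9]
  simp only [dl0, dl1, dl2, dl3, dl4, dl5, dl6, dl7, dl8, pdot,
      show xi9 (1:ℝ) 0 = (0,0) from rfl, show xi9 (1:ℝ) 1 = (1,0) from rfl,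
      show xi9 (1:ℝ) 2 = (0,1) from rfl, show xi9 (1:ℝ) 3 = (-1,0) from rfl,
      show xi9 (1:ℝ) 4 = (0,-1) from rfl, show xi9 (1:ℝ) 5 = (1,1) from rfl,
      show xi9 (1:ℝ) 6 = (-1,1) from rfl, show xi9 (1:ℝ) 7 = (-1,-1) from rfl,
      show xi9 (1:ℝ) 8 = (1,-1) from rfl]
  ring

lemma row7 (g l : ℝ) (u : ℝ × ℝ) (j : Fin 9) :
    (DL g l 1 1 u * DL g l 1 1 u) 7 j = DL g l 1 1 u 7 j := by
  rw [Matrix.mul_apply, sum9]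
  simp only [dl0, dl1, dl2, dl3, dl4, dl5, dl6, dl7, dl8, pdot,
      show xi9 (1:ℝ) 0 = (0,0) from rfl, show xi9 (1:ℝ) 1 = (1,0) from rfl,
      show xi9 (1:ℝ) 2 = (0,1) from rfl, show xi9 (1:ℝ) 3 = (-1,0) from rfl,
      show xi9 (1:ℝ) 4 = (0,-1) from rfl, show xi9 (1:ℝ) 5 = (1,1) from rfl,
      show xi9 (1:ℝ) 6 = (-1,1) from rfl, show xi9 (1:ℝ) 7 = (-1,-1) from rfl,
      show xi9 (1:ℝ) 8 = (1,-1) from rfl]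
  ring

lemma row8 (g l : ℝ) (u : ℝ × ℝ) (j : Fin 9) :
    (DL g l 1 1 u * DL g l 1 1 u) 8 j = DL g l 1 1 u 8 j := by
  rw [Matrix.mul_apply, sum9]
  simp only [dl0, dl1, dl2, dl3, dl4, dl5, dl6, dl7, dl8, pdot,
      show xi9 (1:ℝ) 0 = (0,0) from rfl, show xi9 (1:ℝ) 1 = (1,0) from rfl,
      show xi9 (1:ℝ) 2 = (0,1) from rfl, show xi9 (1:ℝ) 3 = (-1,0) from rfl,
      show xi9 (1:ℝ) 4 = (0,-1) from rfl, show xi9 (1:ℝ) 5 = (1,1) from rfl,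
      show xi9 (1:ℝ) 6 = (-1,1) from rfl, show xi9 (1:ℝ) 7 = (-1,-1) from rfl,
      show xi9 (1:ℝ) 8 = (1,-1) from rfl]
  ring

lemma DL_proj1 (g l : ℝ) (u : ℝ × ℝ) :
    DL g l 1 1 u * DL g l 1 1 u = DL g l 1 1 u := by
  ext i j
  fin_cases i
  · exact row0 g l u j
  · exact row1 g l u j
  · exact row2 g l u j
  · exact row3 g l u j
  · exact row4 g l u j
  · exact row5 g l u j
  · exact row6 g l u j
  · exact row7 g l u j
  · exact row8 g l u j


theorem d2q9_lambda_jacobian_projection (g l e h : ℝ) (he : 0 < e) (u : ℝ × ℝ) :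
    DL g l e h u * DL g l e h u = DL g l e h u := by
  rw [DL_scale g l e h (ne_of_gt he) u]
  exact DL_proj1 _ _ _
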